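/- Let m, n, A be positive reals with m > 1, n > m - 1, and A > ((m-1)/(n-m+1))^(1/n). Define M(γ) = γ^(m-1)*(1 + A^n) - (1 + γ^n * A^n) and γ_max = ((m-1)*(1+A^n)/(n*A^n))^(1/(n-m+1)). Then γ_max < 1, M is strictly decreasing on (γ_max, 1), M(1) = 0, and consequently M(γ) > 0 for all γ ∈ [γ_max, 1). -/

import Mathlib

/-! For `γ > 0` the derivative of `M` is `γ ^ (m - 2) * ((m - 1) * (1 + A ^ n) - n * A ^ n * γ ^ (n - m + 1))`,
negative exactly when `γ > γmax`, so `M` strictly decreases on `[γmax, ∞)`. The hypothesis on `A` says precisely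
that `γmax < 1`, and `M 1 = 0`; hence `M > 0` on `[γmax, 1)`. -/

lemma strictAntiOn_mul_rpow_sub_mul_rpow {p q b c : ℝ} (hp : 0 ≤ p) (hpq : p < q) (hb : 0 ≤ b)
    (hc : 0 < c) :
    StrictAntiOn (fun x : ℝ => b * x ^ p - c * x ^ q)
      (Set.Ici ((p * b / (q * c)) ^ (1 / (q - p)))) := by
  set x₀ := (p * b / (q * c)) ^ (1 / (q - p))
  have hq : 0 < q := hp.trans_lt hpq
  have hqp : 0 < q - p := sub_pos.2 hpq
  have hratio : 0 ≤ p * b / (q * c) := by positivity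
  have hx₀ : 0 ≤ x₀ := Real.rpow_nonneg hratio _
  have hx₀_pow : x₀ ^ (q - p) = p * b / (q * c) := by
    rw [← Real.rpow_mul hratio, one_div_mul_cancel hqp.ne', Real.rpow_one]
  apply strictAntiOn_of_deriv_neg (convex_Ici x₀)
  · exact ((continuous_const.mul (Real.continuous_rpow_const hp)).sub
      (continuous_const.mul (Real.continuous_rpow_const hq.le))).continuousOn
  · intro x hx
    rw [interior_Ici] at hx
    have hx0 : 0 < x := hx₀.trans_lt hx
    have hderiv : HasDerivAt (fun x : ℝ => b * x ^ p - c * x ^ q)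
        (b * (p * x ^ (p - 1)) - c * (q * x ^ (q - 1))) x :=
      ((Real.hasDerivAt_rpow_const (Or.inl hx0.ne')).const_mul b).sub
        ((Real.hasDerivAt_rpow_const (Or.inl hx0.ne')).const_mul c)
    have hcrit : p * b < q * c * x ^ (q - p) := by
      rw [← div_lt_iff₀' (by positivity), ← hx₀_pow]
      exact Real.rpow_lt_rpow hx₀ hx hqp
    have hsplit : x ^ (q - 1) = x ^ (q - p) * x ^ (p - 1) := by
      rw [← Real.rpow_add hx0]; ring_nf
    have := mul_lt_mul_of_pos_right hcrit (Real.rpow_pos_of_pos hx0 (p - 1))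
    rw [hderiv.deriv, hsplit]
    linarith

theorem stmt_4_general (m n A : ℝ) (M : ℝ → ℝ) (γmax : ℝ) (hm : 1 < m)
    (hnm : n > m - 1)
    (hAbig : A ^ n > (m - 1) / (n - m + 1))
    (hM : ∀ γ : ℝ, M γ = γ ^ (m - 1) * (1 + A ^ n) - (1 + γ ^ n * A ^ n))
    (hγmax : γmax = ((m - 1) * (1 + A ^ n) / (n * A ^ n)) ^ (1 / (n - m + 1))) :
    γmax < 1 ∧ StrictAntiOn M (Set.Ioo γmax 1) ∧ M 1 = 0 ∧
      ∀ γ ∈ Set.Ico γmax 1, M γ > 0 := by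
  have hgap : 0 < n - m + 1 := by linarith
  have hAn : 0 < A ^ n := lt_trans (div_pos (by linarith) hgap) hAbig
  have hn : 0 < n := by linarith
  have hγmax' : γmax = ((m - 1) * (1 + A ^ n) / (n * A ^ n)) ^ (1 / (n - (m - 1))) := by
    rw [hγmax]; congr 2; ring
  have hanti : StrictAntiOn M (Set.Ici γmax) := by
    intro x hx y hy hxy
    have := strictAntiOn_mul_rpow_sub_mul_rpow (by linarith) hnm (by linarith) hAn
      (hγmax' ▸ hx) (hγmax' ▸ hy) hxy
    simp only [hM] at this ⊢
    linarith
  have hlt : γmax < 1 := by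
    rw [hγmax]
    refine Real.rpow_lt_one (by positivity) ?_ (by positivity)
    rw [div_lt_one (by positivity)]
    rw [gt_iff_lt, div_lt_iff₀ hgap] at hAbig
    linarith
  have hM1 : M 1 = 0 := by simp [hM]
  refine ⟨hlt, hanti.mono fun _ hx => Set.mem_Ici.2 hx.1.le, hM1, fun γ hγ => ?_⟩
  linarith [hanti hγ.1 (Set.mem_Ici.2 hlt.le) hγ.2]

theorem stmt_4 (m n A : ℝ) (M : ℝ → ℝ) (γmax : ℝ) (hA : 0 < A) (hm : 1 < m) (hn : 0 < n)
    (hnm : n > m - 1)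
    (hAbig : A ^ n > (m - 1) / (n - m + 1))
    (hM : ∀ γ : ℝ, M γ = γ ^ (m - 1) * (1 + A ^ n) - (1 + γ ^ n * A ^ n))
    (hγmax : γmax = ((m - 1) * (1 + A ^ n) / (n * A ^ n)) ^ (1 / (n - m + 1))) :
    γmax < 1 ∧ StrictAntiOn M (Set.Ioo γmax 1) ∧ M 1 = 0 ∧
      ∀ γ ∈ Set.Ico γmax 1, M γ > 0 :=
  stmt_4_general m n A M γmax hm hnm hAbig hM hγmax
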